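/- Let Q be a proximity matrix satisfying the Enriques axioms (E1)–(E4) and let α̃ be a multiplicity vector for Q satisfying the terminal conditions of the canonical resolution, with ε_i = β̃_i mod 2 as associated branch data. Suppose there exists j > 1 with ε_j = 0, q_j infinitely near of order one to q_1 (q_{1j} = 1 and q_{ij} = 0 for all i ≠ 1), and m_{1i} + m_{ji} even for every i with ε_i = 0 (i.e. the fundamental cycle of the canonical resolution is strictly contained in the fiber cycle). Then α̃_1 and α̃_j are odd and α̃_1 ≡ α̃_j (mod 4); in particular α̃_1 + α̃_j ≡ 2 (mod 4). -/

import Mathlib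

open Matrix Finset

/-- A proximity matrix: strictly upper triangular with entries `0` or `1`. -/
def IsProxMat {n : ℕ} (Q : Matrix (Fin n) (Fin n) ℤ) : Prop :=
  (∀ i j : Fin n, ¬ i < j → Q i j = 0) ∧ (∀ i j : Fin n, Q i j = 0 ∨ Q i j = 1)

/-- `M = N⁻¹ = 1 + Q + ⋯ + Q^(n-1)`. -/
def Mmat {n : ℕ} (Q : Matrix (Fin n) (Fin n) ℤ) : Matrix (Fin n) (Fin n) ℤ :=
  ∑ k ∈ Finset.range n, Q ^ k

/-- The intersection matrix `S = -(1-Q)(1-Q)ᵀ` of the exceptional curves. -/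
def Smat {n : ℕ} (Q : Matrix (Fin n) (Fin n) ℤ) : Matrix (Fin n) (Fin n) ℤ :=
  -((1 - Q) * (1 - Q)ᵀ)

/-- The Enriques axioms (E1)–(E4) for a proximity matrix. -/
def EnriquesAxioms {n : ℕ} (Q : Matrix (Fin n) (Fin n) ℤ) : Prop :=
  (∀ j : Fin n, 0 < j.val → ∃ i : Fin n, i < j ∧ Q i j = 1) ∧
  (∀ j : Fin n, (Finset.univ.filter fun i => Q i j = 1).card ≤ 2) ∧
  (∀ i j k : Fin n, i < j → Q i k = 1 → Q j k = 1 → Q i j = 1) ∧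
  (∀ i j : Fin n, i < j → ∀ k k' : Fin n,
    Q i k = 1 → Q j k = 1 → Q i k' = 1 → Q j k' = 1 → k = k')

/-- A branch vector for `Q`: each `ε i ∈ {0,1}`, and `s_{ij}` is even whenever
`ε_i = ε_j = 1`. -/
def IsBranchVec {n : ℕ} (Q : Matrix (Fin n) (Fin n) ℤ) (ε : Fin n → ℤ) : Prop :=
  (∀ i, ε i = 0 ∨ ε i = 1) ∧ ∀ i j, ε i = 1 → ε j = 1 → 2 ∣ Smat Q i j

/-- The intersection matrix `T_{ij} = (2 - ε_i)(2 - ε_j) s_{ij} / 2` of the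
exceptional curves `F_i` of the canonical resolution. -/
def Tmat {n : ℕ} (Q : Matrix (Fin n) (Fin n) ℤ) (ε : Fin n → ℤ) :
    Matrix (Fin n) (Fin n) ℤ :=
  fun i j => (2 - ε i) * (2 - ε j) * Smat Q i j / 2

/-- The fiber vector `f_i = (1 + ε_i) m_{1i}` (with first blown-up point `i0`). -/
def fiberVec {n : ℕ} (Q : Matrix (Fin n) (Fin n) ℤ) (ε : Fin n → ℤ) (i0 : Fin n) :
    Fin n → ℤ :=
  fun i => (1 + ε i) * Mmat Q i0 i

/-- `z` is the fundamental cycle for the intersection matrix `T`: the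
componentwise-least vector with `z_i ≥ 1` for all `i` and `(T z)_k ≤ 0` for all `k`. -/
def IsFundCycle {n : ℕ} (T : Matrix (Fin n) (Fin n) ℤ) (z : Fin n → ℤ) : Prop :=
  (∀ i, 1 ≤ z i) ∧ (∀ k, (T *ᵥ z) k ≤ 0) ∧
  ∀ w : Fin n → ℤ, (∀ i, 1 ≤ w i) → (∀ k, (T *ᵥ w) k ≤ 0) → z ≤ w

/-- A multiplicity vector for `Q`: nonnegative entries satisfying the proximity
inequalities `α̃_i ≥ ∑_j q_{ij} α̃_j`. -/
def IsMultVec {n : ℕ} (Q : Matrix (Fin n) (Fin n) ℤ) (a : Fin n → ℤ) : Prop :=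
  (∀ i, 0 ≤ a i) ∧ ∀ i, (∑ j, Q i j * a j) ≤ a i

/-- `β̃ = α̃ M`: multiplicities of the total transform of the branch curve. -/
def betaVec {n : ℕ} (Q : Matrix (Fin n) (Fin n) ℤ) (a : Fin n → ℤ) : Fin n → ℤ :=
  a ᵥ* Mmat Q

/-- `γ̃ = α̃ Nᵀ`: intersection degrees of the proper transform of the branch curve
with the exceptional curves. -/
def gammaVec {n : ℕ} (Q : Matrix (Fin n) (Fin n) ℤ) (a : Fin n → ℤ) : Fin n → ℤ :=
  a ᵥ* (1 - Q)ᵀ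

/-- `ε_i = β̃_i mod 2`: the branchedness of the `i`-th exceptional curve. -/
def epsVec {n : ℕ} (Q : Matrix (Fin n) (Fin n) ℤ) (a : Fin n → ℤ) : Fin n → ℤ :=
  fun i => betaVec Q a i % 2

/-- `μ = α̃ + ε Q`: the multiplicities of the total branch curves at the blown-up
points. -/
def muVec {n : ℕ} (Q : Matrix (Fin n) (Fin n) ℤ) (a : Fin n → ℤ) : Fin n → ℤ :=
  fun i => a i + (epsVec Q a ᵥ* Q) i

/-- `α = μ - ε`. -/
def alphaVec {n : ℕ} (Q : Matrix (Fin n) (Fin n) ℤ) (a : Fin n → ℤ) : Fin n → ℤ :=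
  fun i => muVec Q a i - epsVec Q a i

/-- The terminal conditions of the canonical resolution: `γ̃_i = 0` whenever
`ε_i = 1`; `s_{ij} = 0` whenever `i ≠ j` and `ε_i = ε_j = 1`; and `μ_i ≥ 2`. -/
def TerminalConds {n : ℕ} (Q : Matrix (Fin n) (Fin n) ℤ) (a : Fin n → ℤ) : Prop :=
  (∀ i, epsVec Q a i = 1 → gammaVec Q a i = 0) ∧
  (∀ i j, i ≠ j → epsVec Q a i = 1 → epsVec Q a j = 1 → Smat Q i j = 0) ∧
  (∀ i, 2 ≤ muVec Q a i)

/-!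
Put `u = m₁ + m_j` (the sum of the rows of `M` at `q₁` and `q_j`), so that `u N = e₁ + e_j`.
Then `u ⬝ γ̃ = α̃₁ + α̃_j`, `S u = -e_j` (the column of `Q` at `q_j` is `e₁`) and `u S u = -2`.
Since `u` is even on the unbranched curves, `u = v + 2h` with `v` supported on the branched ones.
As `γ̃ = -S β̃` and `β̃ ≡ ε (mod 2)`, the half `h ⬝ γ̃ = (α̃₁ + α̃_j)/2` is congruent mod 2 to the
sum of `(S h)_p` over the branched `p`. On the branched curves `S` is diagonal (terminal
conditions) with even diagonal (from `γ̃_p = 0`), and expanding `u S u = -2` shows that this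
sum is odd. Finally `α̃₁ = β̃₁` is odd because `m₁₁ + m_{j1} = 1` forces `ε₁ = 1`.
-/

lemma odd_sum_mulVec_of_emod_four {ι : Type*} [Fintype ι] (S : Matrix ι ι ℤ) (hS : Sᵀ = S)
    (B : Finset ι) (hSB : ∀ p ∈ B, ∀ k ∈ B, p ≠ k → S p k = 0) (hdiag : ∀ p ∈ B, Even (S p p))
    (v h : ι → ℤ) (hv : ∀ k ∉ B, v k = 0) (hker : ∀ p ∈ B, (S *ᵥ (v + 2 • h)) p = 0)
    (hq : (v + 2 • h) ⬝ᵥ S *ᵥ (v + 2 • h) % 4 = 2) :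
    Odd (∑ p ∈ B, (S *ᵥ h) p) := by
  have hsupp (w : ι → ℤ) : v ⬝ᵥ w = ∑ p ∈ B, v p * w p :=
    (Finset.sum_subset (subset_univ B) fun k _ hk => by rw [hv k hk, zero_mul]).symm
  have hSv (p) (hp : p ∈ B) : (S *ᵥ v) p = S p p * v p := by
    rw [mulVec, dotProduct, Finset.sum_eq_single p]
    · intro k _ hkp
      by_cases hk : k ∈ B
      · rw [hSB p hp k hk (Ne.symm hkp), zero_mul]
      · rw [hv k hk, mul_zero]
    · simp
  have hparity (p) (hp : p ∈ B) : Even (v p * (S *ᵥ h) p - (S *ᵥ h) p) := by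
    obtain ⟨c, hc⟩ := hdiag p hp
    have hp' := hker p hp
    rw [mulVec_add, mulVec_smul, Pi.add_apply, Pi.smul_apply, hSv p hp, hc, nsmul_eq_mul,
      Nat.cast_ofNat] at hp'
    have hSh : (S *ᵥ h) p = -c * v p := by linarith
    rw [hSh]
    convert (Int.even_mul_pred_self (v p)).mul_left (-c) using 1
    ring
  have hodd : Odd (v ⬝ᵥ S *ᵥ h) := by
    have hvSu : v ⬝ᵥ S *ᵥ (v + 2 • h) = 0 := by
      rw [hsupp]
      exact Finset.sum_eq_zero fun p hp => by rw [hker p hp, mul_zero]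
    have hsymm : h ⬝ᵥ S *ᵥ v = v ⬝ᵥ S *ᵥ h := by
      rw [dotProduct_mulVec, ← mulVec_transpose, hS, dotProduct_comm]
    rw [add_dotProduct, hvSu, zero_add, smul_dotProduct, mulVec_add, dotProduct_add, hsymm,
      mulVec_smul, dotProduct_smul, nsmul_eq_mul, nsmul_eq_mul] at hq
    rw [Int.odd_iff]
    omega
  have heven := Finset.even_sum _ hparity
  rw [Finset.sum_sub_distrib, ← hsupp] at heven
  rw [Int.odd_iff] at hodd ⊢
  rw [Int.even_iff] at heven
  omega

section StrictlyUpper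

variable {n : ℕ} {Q : Matrix (Fin n) (Fin n) ℤ}

lemma pow_apply_eq_zero_of_lt_add (hQ : ∀ i j : Fin n, ¬ i < j → Q i j = 0) (k : ℕ) :
    ∀ i j : Fin n, (j : ℕ) < i + k → (Q ^ k) i j = 0 := by
  induction k with
  | zero =>
    intro i j h
    rw [pow_zero, one_apply_ne]
    rintro rfl
    omega
  | succ k ih =>
    intro i j h
    rw [pow_succ, mul_apply]
    refine Finset.sum_eq_zero fun l _ => ?_
    by_cases hl : (l : ℕ) < i + k
    · rw [ih i l hl, zero_mul]
    · rw [hQ l j (by rw [Fin.lt_def]; omega), mul_zero]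

lemma pow_eq_zero_of_strictlyUpper (hQ : ∀ i j : Fin n, ¬ i < j → Q i j = 0) : Q ^ n = 0 := by
  ext i j
  exact pow_apply_eq_zero_of_lt_add hQ n i j (by omega)

lemma Mmat_mul_one_sub (hQ : ∀ i j : Fin n, ¬ i < j → Q i j = 0) : Mmat Q * (1 - Q) = 1 := by
  have h := geom_sum_mul Q n
  rw [pow_eq_zero_of_strictlyUpper hQ, zero_sub] at h
  rw [Mmat, ← neg_sub, mul_neg, h, neg_neg]

lemma Mmat_row_vecMul_one_sub (hQ : ∀ i j : Fin n, ¬ i < j → Q i j = 0) (i : Fin n) :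
    Mmat Q i ᵥ* (1 - Q) = Pi.single i 1 := by
  have h := single_one_vecMul i (Mmat Q * (1 - Q))
  rw [← vecMul_vecMul, single_one_vecMul, Mmat_mul_one_sub hQ] at h
  ext k
  simpa [row, one_apply, Pi.single_apply, eq_comm] using congrFun h k

lemma Mmat_mulVec_one_sub_mulVec (hQ : ∀ i j : Fin n, ¬ i < j → Q i j = 0) (w : Fin n → ℤ) :
    Mmat Q *ᵥ ((1 - Q) *ᵥ w) = w := by
  rw [mulVec_mulVec, Mmat_mul_one_sub hQ, one_mulVec]

lemma betaVec_vecMul_one_sub (hQ : ∀ i j : Fin n, ¬ i < j → Q i j = 0) (a : Fin n → ℤ) :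
    betaVec Q a ᵥ* (1 - Q) = a := by
  rw [betaVec, vecMul_vecMul, Mmat_mul_one_sub hQ, vecMul_one]

lemma Mmat_apply_of_col_eq_zero (hQ : ∀ i j : Fin n, ¬ i < j → Q i j = 0) {i : Fin n}
    (hi : Q.col i = 0) (k : Fin n) : Mmat Q k i = (1 : Matrix (Fin n) (Fin n) ℤ) k i := by
  have h := congrFun (Mmat_mulVec_one_sub_mulVec hQ (Pi.single i 1)) k
  rw [sub_mulVec, one_mulVec, mulVec_single_one, hi, sub_zero, mulVec_single_one] at h
  simpa [one_apply, Pi.single_apply] using h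

lemma betaVec_apply_of_col_eq_zero (hQ : ∀ i j : Fin n, ¬ i < j → Q i j = 0) {i : Fin n}
    (hi : Q.col i = 0) (a : Fin n → ℤ) : betaVec Q a i = a i := by
  simp [betaVec, vecMul, dotProduct, Mmat_apply_of_col_eq_zero hQ hi, one_apply]

end StrictlyUpper

section IntersectionForm

variable {n : ℕ} {Q : Matrix (Fin n) (Fin n) ℤ}

lemma Smat_transpose : (Smat Q)ᵀ = Smat Q := by
  rw [Smat, transpose_neg, transpose_mul, transpose_transpose]

lemma Smat_mulVec (w : Fin n → ℤ) : Smat Q *ᵥ w = -((1 - Q) *ᵥ (w ᵥ* (1 - Q))) := by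
  rw [Smat, neg_mulVec, ← mulVec_mulVec, mulVec_transpose]

lemma dotProduct_Smat_mulVec_self (w : Fin n → ℤ) :
    w ⬝ᵥ Smat Q *ᵥ w = -(w ᵥ* (1 - Q) ⬝ᵥ w ᵥ* (1 - Q)) := by
  rw [Smat_mulVec, dotProduct_neg, dotProduct_mulVec]

lemma dotProduct_gammaVec (w a : Fin n → ℤ) : w ⬝ᵥ gammaVec Q a = w ᵥ* (1 - Q) ⬝ᵥ a := by
  rw [gammaVec, vecMul_transpose, dotProduct_mulVec]

lemma dotProduct_gammaVec_eq_neg (hQ : ∀ i j : Fin n, ¬ i < j → Q i j = 0) (w a : Fin n → ℤ) :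
    w ⬝ᵥ gammaVec Q a = -(Smat Q *ᵥ w ⬝ᵥ betaVec Q a) := by
  rw [dotProduct_gammaVec, Smat_mulVec, neg_dotProduct, neg_neg, dotProduct_comm ((1 - Q) *ᵥ _),
    dotProduct_mulVec, betaVec_vecMul_one_sub hQ, dotProduct_comm]

end IntersectionForm

section Parity

variable {n : ℕ} {Q : Matrix (Fin n) (Fin n) ℤ} {a : Fin n → ℤ}

def branched (Q : Matrix (Fin n) (Fin n) ℤ) (a : Fin n → ℤ) : Finset (Fin n) :=
  univ.filter fun i => epsVec Q a i = 1

lemma mem_branched {i : Fin n} : i ∈ branched Q a ↔ epsVec Q a i = 1 := by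
  simp [branched]

lemma epsVec_eq_zero_or_one (i : Fin n) : epsVec Q a i = 0 ∨ epsVec Q a i = 1 :=
  Int.emod_two_eq _

lemma dotProduct_betaVec_modEq (w : Fin n → ℤ) :
    w ⬝ᵥ betaVec Q a ≡ ∑ p ∈ branched Q a, w p [ZMOD 2] := by
  rw [branched, Finset.sum_filter, Int.modEq_iff_dvd, dotProduct, ← Finset.sum_sub_distrib]
  refine Finset.dvd_sum fun p _ => ?_
  have hε : (if epsVec Q a p = 1 then w p else 0) = w p * epsVec Q a p := by
    rcases epsVec_eq_zero_or_one (Q := Q) (a := a) p with h | h <;> simp [h]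
  rw [hε, ← mul_sub]
  exact Dvd.dvd.mul_left (by simp only [epsVec]; omega) _

lemma even_Smat_apply_self (hQ : ∀ i j : Fin n, ¬ i < j → Q i j = 0) (hT : TerminalConds Q a)
    {p : Fin n} (hp : p ∈ branched Q a) : Even (Smat Q p p) := by
  have hγ := dotProduct_gammaVec_eq_neg hQ (Pi.single p 1) a
  rw [single_dotProduct, one_mul, hT.1 p (mem_branched.1 hp), zero_eq_neg] at hγ
  have hsum : ∑ k ∈ branched Q a, (Smat Q *ᵥ Pi.single p 1) k = Smat Q p p := by
    rw [Finset.sum_eq_single_of_mem p hp]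
    · simp
    · intro k hk hkp
      simpa [mulVec_single_one] using hT.2.1 k p hkp (mem_branched.1 hk) (mem_branched.1 hp)
  have h := dotProduct_betaVec_modEq (Q := Q) (a := a) (Smat Q *ᵥ Pi.single p 1)
  rw [hγ, hsum, Int.modEq_iff_dvd, sub_zero] at h
  exact even_iff_two_dvd.2 h

end Parity

lemma dotProduct_gammaVec_emod_four {n : ℕ} {Q : Matrix (Fin n) (Fin n) ℤ} {a : Fin n → ℤ}
    (hQ : ∀ i j : Fin n, ¬ i < j → Q i j = 0) (hT : TerminalConds Q a) (u : Fin n → ℤ)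
    (hu : ∀ k, epsVec Q a k = 0 → 2 ∣ u k) (hker : ∀ p ∈ branched Q a, (Smat Q *ᵥ u) p = 0)
    (hq : u ⬝ᵥ Smat Q *ᵥ u % 4 = 2) :
    u ⬝ᵥ gammaVec Q a % 4 = 2 := by
  set v : Fin n → ℤ := fun k => if epsVec Q a k = 1 then u k else 0
  set h : Fin n → ℤ := fun k => if epsVec Q a k = 1 then 0 else u k / 2
  have huvh : u = v + 2 • h := by
    ext k
    rcases epsVec_eq_zero_or_one (Q := Q) (a := a) k with hk | hk
    · have := hu k hk
      simp only [v, h, hk, Pi.add_apply, nsmul_eq_mul, Nat.cast_ofNat, Pi.mul_apply,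
        Pi.ofNat_apply, zero_ne_one, if_false, zero_add]
      omega
    · simp [v, h, hk]
  have hodd := odd_sum_mulVec_of_emod_four (Smat Q) Smat_transpose (branched Q a)
    (fun p hp k hk hpk => hT.2.1 p k hpk (mem_branched.1 hp) (mem_branched.1 hk))
    (fun p hp => even_Smat_apply_self hQ hT hp) v h
    (fun k hk => if_neg (mt mem_branched.2 hk)) (huvh ▸ hker) (huvh ▸ hq)
  have hvγ : v ⬝ᵥ gammaVec Q a = 0 := Finset.sum_eq_zero fun k _ => by
    by_cases hk : epsVec Q a k = 1 <;> simp [v, hk, hT.1 k]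
  have hmod := dotProduct_betaVec_modEq (Q := Q) (a := a) (Smat Q *ᵥ h)
  rw [huvh, add_dotProduct, hvγ, zero_add, smul_dotProduct, dotProduct_gammaVec_eq_neg hQ,
    nsmul_eq_mul]
  rw [Int.odd_iff] at hodd
  unfold Int.ModEq at hmod
  omega

lemma add_emod_four_of_col_eq_single {n : ℕ} {Q : Matrix (Fin n) (Fin n) ℤ} {a : Fin n → ℤ}
    (hQ : ∀ i j : Fin n, ¬ i < j → Q i j = 0) (hT : TerminalConds Q a) {i j : Fin n}
    (hij : j ≠ i) (hi : Q.col i = 0) (hj : Q.col j = Pi.single i 1) (hεj : epsVec Q a j = 0)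
    (hu : ∀ k, epsVec Q a k = 0 → 2 ∣ Mmat Q i k + Mmat Q j k) :
    (a i + a j) % 4 = 2 := by
  set u : Fin n → ℤ := Mmat Q i + Mmat Q j
  have huN : u ᵥ* (1 - Q) = Pi.single i 1 + Pi.single j 1 := by
    rw [add_vecMul, Mmat_row_vecMul_one_sub hQ, Mmat_row_vecMul_one_sub hQ]
  have hSu : Smat Q *ᵥ u = -Pi.single j 1 := by
    rw [Smat_mulVec, huN, sub_mulVec, one_mulVec, mulVec_add, mulVec_single_one,
      mulVec_single_one, hi, hj]
    abel
  have hker (p : Fin n) (hp : p ∈ branched Q a) : (Smat Q *ᵥ u) p = 0 := by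
    have hpj : p ≠ j := by rintro rfl; simp [mem_branched, hεj] at hp
    simp [hSu, hpj]
  have hq : u ⬝ᵥ Smat Q *ᵥ u % 4 = 2 := by
    rw [dotProduct_Smat_mulVec_self, huN]
    simp [dotProduct_add, hij, hij.symm]
  have hγ := dotProduct_gammaVec_emod_four hQ hT u hu hker hq
  rwa [dotProduct_gammaVec, huN, add_dotProduct, single_dotProduct, single_dotProduct,
    one_mul, one_mul] at hγ

theorem multiplicities_mod_four_general
    (n : ℕ) (hn : 1 ≤ n) (Q : Matrix (Fin n) (Fin n) ℤ)
    (hQ : IsProxMat Q)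
    (a : Fin n → ℤ) (hterm : TerminalConds Q a)
    (j : Fin n) (hj0 : j ≠ ⟨0, hn⟩) (hj1 : epsVec Q a j = 0)
    (hj2 : Q ⟨0, hn⟩ j = 1 ∧ ∀ i : Fin n, i ≠ ⟨0, hn⟩ → Q i j = 0)
    (hj3 : ∀ i : Fin n, epsVec Q a i = 0 →
      2 ∣ (Mmat Q ⟨0, hn⟩ i + Mmat Q j i)) :
    Odd (a ⟨0, hn⟩) ∧ Odd (a j) ∧
    a ⟨0, hn⟩ % 4 = a j % 4 ∧ (a ⟨0, hn⟩ + a j) % 4 = 2 := by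
  obtain ⟨hQ, -⟩ := hQ
  set i0 : Fin n := ⟨0, hn⟩
  have hcol0 : Q.col i0 = 0 := funext fun k => hQ k i0 (Nat.not_lt_zero k)
  have hcolj : Q.col j = Pi.single i0 1 := by
    ext k
    by_cases hk : k = i0
    · simp [hk, hj2.1]
    · simp [hk, hj2.2 k hk]
  have hmod4 := add_emod_four_of_col_eq_single hQ hterm hj0 hcol0 hcolj hj1 hj3
  have hε0 : epsVec Q a i0 = 1 := by
    refine (epsVec_eq_zero_or_one i0).resolve_left fun h => ?_
    have h1 := hj3 i0 h
    rw [Mmat_apply_of_col_eq_zero hQ hcol0, Mmat_apply_of_col_eq_zero hQ hcol0, one_apply_eq,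
      one_apply_ne hj0] at h1
    norm_num at h1
  rw [epsVec, betaVec_apply_of_col_eq_zero hQ hcol0] at hε0
  exact ⟨Int.odd_iff.2 hε0, Int.odd_iff.2 (by omega), by omega, hmod4⟩

/-- Suppose the fundamental cycle of the canonical resolution is
strictly contained in the fiber cycle, i.e. there is `j > 1` with `ε_j = 0`, `q_j`
infinitely near of order one to `q_1`, and `m_{1i} + m_{ji}` even for all `i` with
`ε_i = 0`.  Then `α̃_1` and `α̃_j` are odd, `α̃_1 ≡ α̃_j (mod 4)`, and in particular
`α̃_1 + α̃_j ≡ 2 (mod 4)`. -/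
theorem multiplicities_mod_four
    (n : ℕ) (hn : 1 ≤ n) (Q : Matrix (Fin n) (Fin n) ℤ)
    (hQ : IsProxMat Q) (hE : EnriquesAxioms Q)
    (a : Fin n → ℤ) (ha : IsMultVec Q a) (hterm : TerminalConds Q a)
    (j : Fin n) (hj0 : j ≠ ⟨0, hn⟩) (hj1 : epsVec Q a j = 0)
    (hj2 : Q ⟨0, hn⟩ j = 1 ∧ ∀ i : Fin n, i ≠ ⟨0, hn⟩ → Q i j = 0)
    (hj3 : ∀ i : Fin n, epsVec Q a i = 0 →
      2 ∣ (Mmat Q ⟨0, hn⟩ i + Mmat Q j i)) :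
    Odd (a ⟨0, hn⟩) ∧ Odd (a j) ∧
    a ⟨0, hn⟩ % 4 = a j % 4 ∧ (a ⟨0, hn⟩ + a j) % 4 = 2 :=
  multiplicities_mod_four_general n hn Q hQ a hterm j hj0 hj1 hj2 hj3
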